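/- Let A be an n×n symplectic quaternionic matrix whose right eigenvalue similarity classes [q₁],…,[q_n] are ordered so that Re(q₁) ≤ … ≤ Re(q_n). If λ is a left eigenvalue of A with dim V(λ) ≥ k, then Re(q_k) ≤ Re(λ) ≤ Re(q_{n−k+1}); moreover if k > ⌈n/2⌉ then [q_{n−k+1}] = … = [q_k] = [λ]. -/

import Mathlib

/-!
Let `U` be the matrix whose columns are the orthonormal right eigenvectors `u j`, so that
`Uᴴ * A * U = diagonal q`. For a left eigenvector `A v = λ v` with coordinates `c = Uᴴ v`,
the real part of `star v ⬝ᵥ A v` gives `Re λ · ∑ |c j|² = ∑ Re (q j) · |c j|²`, so `Re λ` is a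
weighted mean of the `Re (q j)` over the support of `c`. As `dim V(λ) ≥ k`, some nonzero `v` in
`V(λ)` has `c` vanishing on any `k - 1` prescribed indices: the first `k - 1` give the lower
bound, the last `k - 1` the upper one. When `k > ⌈n/2⌉` the two bounds squeeze `Re (q j) = Re λ`
on the middle indices; since `A` is an isometry all these eigenvalues are unit quaternions, and
unit quaternions with the same real part are similar.
-/

open Quaternion Matrix

theorem le_of_mul_sum_eq_sum_mul {ι : Type*} [Fintype ι] {w x : ι → ℝ} {L m : ℝ}
    (hw : ∀ j, 0 ≤ w j) (hpos : 0 < ∑ j, w j) (hL : L * ∑ j, w j = ∑ j, x j * w j)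
    (hm : ∀ j, w j ≠ 0 → m ≤ x j) : m ≤ L := by
  refine le_of_mul_le_mul_right ?_ hpos
  rw [hL, Finset.mul_sum]
  refine Finset.sum_le_sum fun j _ => ?_
  rcases eq_or_ne (w j) 0 with hj | hj
  · simp [hj]
  · exact mul_le_mul_of_nonneg_right (hm j hj) (hw j)

theorem ge_of_mul_sum_eq_sum_mul {ι : Type*} [Fintype ι] {w x : ι → ℝ} {L m : ℝ}
    (hw : ∀ j, 0 ≤ w j) (hpos : 0 < ∑ j, w j) (hL : L * ∑ j, w j = ∑ j, x j * w j)
    (hm : ∀ j, w j ≠ 0 → x j ≤ m) : L ≤ m := by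
  refine neg_le_neg_iff.mp (le_of_mul_sum_eq_sum_mul hw hpos (x := fun j => -x j) ?_
    fun j hj => neg_le_neg (hm j hj))
  simp only [neg_mul, hL, Finset.sum_neg_distrib]

namespace Quaternion

variable {R : Type*} [CommRing R]

theorem re_mul_comm (a b : ℍ[R]) : (a * b).re = (b * a).re := by
  simp only [re_mul]; ring

theorem re_sum {ι : Type*} (s : Finset ι) (f : ι → ℍ[R]) :
    (∑ i ∈ s, f i).re = ∑ i ∈ s, (f i).re :=
  map_sum (QuaternionAlgebra.reₗ (-1) 0 (-1)) f s

theorem re_star_mul_mul_self (c l : ℍ[R]) : (star c * (l * c)).re = l.re * normSq c := by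
  rw [re_mul_comm, mul_assoc, self_mul_star, mul_coe_eq_smul, re_smul, smul_eq_mul, mul_comm]

theorem exists_ne_zero_mul_eq_mul_star [Nontrivial R] (p : ℍ[R]) :
    ∃ r ≠ 0, p * r = r * star p := by
  by_cases hp : p.imI = 0 ∧ p.imJ = 0
  · refine ⟨(equivProd R).symm (0, 1, 0, 0), fun h => one_ne_zero (congrArg (·.imI) h), ?_⟩
    ext <;> simp [hp.1, hp.2]
  · refine ⟨(equivProd R).symm (0, p.imJ, -p.imI, 0), fun h => hp ?_, ?_⟩
    · exact ⟨by simpa using congrArg (·.imJ) h, by simpa using congrArg (·.imI) h⟩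
    · ext <;> simp only [re_mul, imI_mul, imJ_mul, imK_mul, re_star, imI_star, imJ_star, imK_star,
        re_equivProd_symm_apply, imI_equivProd_symm_apply, imJ_equivProd_symm_apply,
        imK_equivProd_symm_apply] <;> ring

/-- With `p = a + P` and `l = a + L`, `r = P + L` works because `P² = -|P|² = -|L|² = L²`;
if `P + L = 0` then `l = star p`. -/
theorem exists_ne_zero_mul_eq_mul_of_re_eq_of_normSq_eq [Nontrivial R] {p l : ℍ[R]}
    (hre : p.re = l.re) (hnorm : normSq p = normSq l) : ∃ r ≠ 0, p * r = r * l := by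
  by_cases him : p.im + l.im = 0
  · have hl : l = star p := by
      rw [← re_add_im l, eq_neg_of_add_eq_zero_right him, ← hre, ← re_add_im (star p)]
      simp
    exact hl ▸ exists_ne_zero_mul_eq_mul_star p
  · refine ⟨p.im + l.im, him, ?_⟩
    rw [normSq_def', normSq_def', hre] at hnorm
    ext <;> simp only [re_mul, imI_mul, imJ_mul, imK_mul, re_add, imI_add, imJ_add, imK_add,
      re_im, imI_im, imJ_im, imK_im]
    · linear_combination -hnorm
    · linear_combination (p.imI + l.imI) * hre
    · linear_combination (p.imJ + l.imJ) * hre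
    · linear_combination (p.imK + l.imK) * hre

theorem re_star_dotProduct_mul {ι : Type*} [Fintype ι] (q c : ι → ℍ[R]) :
    (star c ⬝ᵥ fun j => q j * c j).re = ∑ j, (q j).re * normSq (c j) := by
  simp only [dotProduct, Pi.star_apply, re_sum, re_star_mul_mul_self]

theorem re_star_dotProduct_self {ι : Type*} [Fintype ι] (c : ι → ℍ[R]) :
    (star c ⬝ᵥ c).re = ∑ j, normSq (c j) := by
  simpa using re_star_dotProduct_mul 1 c

theorem sum_normSq_pos {ι : Type*} [Fintype ι] {v : ι → ℍ[ℝ]} (hv : v ≠ 0) :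
    0 < ∑ i, normSq (v i) := by
  obtain ⟨i, hi⟩ := Function.ne_iff.mp hv
  exact Finset.sum_pos' (fun i _ => normSq_nonneg)
    ⟨i, Finset.mem_univ i, normSq_nonneg.lt_of_ne' (normSq_ne_zero.mpr hi)⟩

end Quaternion

instance DivisionRing.moduleFinite_mulOpposite (D : Type*) [DivisionRing D] :
    Module.Finite Dᵐᵒᵖ D :=
  .equiv (MulOpposite.opLinearEquiv Dᵐᵒᵖ).symm

theorem Module.finrank_mulOpposite_fintype_fun_eq_card (D : Type*) [DivisionRing D]
    (ι : Type*) [Fintype ι] : Module.finrank Dᵐᵒᵖ (ι → D) = Fintype.card ι := by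
  rw [(LinearEquiv.piCongrRight fun _ => MulOpposite.opLinearEquiv Dᵐᵒᵖ).finrank_eq,
    Module.finrank_fintype_fun_eq_card]

theorem Submodule.exists_mem_ne_zero_forall_mulVec_eq_zero {D m n : Type*} [DivisionRing D]
    [Fintype n] (V : Submodule Dᵐᵒᵖ (n → D)) (M : Matrix m n D) (s : Finset m)
    (h : s.card < Module.finrank Dᵐᵒᵖ V) : ∃ v ∈ V, v ≠ 0 ∧ ∀ i ∈ s, (M *ᵥ v) i = 0 := by
  rw [← Fintype.card_coe, ← Module.finrank_mulOpposite_fintype_fun_eq_card D] at h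
  let f := (mulVecBilin D Dᵐᵒᵖ (M.submatrix ((↑) : s → m) id)).comp V.subtype
  obtain ⟨v, hv, hv0⟩ := exists_mem_ne_zero_of_ne_bot (LinearMap.ker_ne_bot_of_finrank_lt h (f := f))
  exact ⟨v, v.2, by simpa using hv0, fun i hi => congrFun hv ⟨i, hi⟩⟩

namespace Matrix

theorem star_mulVec_dotProduct {R m n : Type*} [NonUnitalSemiring R] [StarRing R]
    [Fintype m] [Fintype n] (A : Matrix m n R) (x : n → R) (y : m → R) :
    star (A *ᵥ x) ⬝ᵥ y = star x ⬝ᵥ (Aᴴ *ᵥ y) := by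
  rw [star_mulVec, dotProduct_mulVec]

section Columns

variable {R n : Type*} [Semiring R] [Fintype n] [DecidableEq n] {u : n → n → R}

theorem conjTranspose_transpose_of_mul_transpose_of [StarRing R]
    (hu : ∀ i j, star (u i) ⬝ᵥ u j = if i = j then 1 else 0) : (of u)ᵀᴴ * (of u)ᵀ = 1 :=
  Matrix.ext fun i j => by simpa [mul_apply, dotProduct, one_apply] using hu i j

theorem mul_transpose_of_eq_transpose_of_mul_diagonal {A : Matrix n n R} {q : n → R}
    (hu : ∀ j, A *ᵥ u j = fun l => u j l * q j) : A * (of u)ᵀ = (of u)ᵀ * diagonal q :=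
  Matrix.ext fun i j => by
    rw [mul_diagonal]
    simpa [mul_apply, mulVec, dotProduct] using congrFun (hu j) i

end Columns

variable {m n : Type*} [Fintype m] [Fintype n] [DecidableEq n]

theorem sum_normSq_mulVec_of_conjTranspose_mul_self {A : Matrix m n ℍ[ℝ]} (hA : Aᴴ * A = 1)
    (v : n → ℍ[ℝ]) : ∑ i, normSq ((A *ᵥ v) i) = ∑ i, normSq (v i) := by
  rw [← re_star_dotProduct_self, ← re_star_dotProduct_self, star_mulVec_dotProduct,
    mulVec_mulVec, hA, one_mulVec]

theorem normSq_eq_one_of_conjTranspose_mul_self {A : Matrix n n ℍ[ℝ]} (hA : Aᴴ * A = 1)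
    {v : n → ℍ[ℝ]} (hv : v ≠ 0) {c : ℍ[ℝ]}
    (hc : ∀ i, normSq ((A *ᵥ v) i) = normSq c * normSq (v i)) : normSq c = 1 := by
  have h := sum_normSq_mulVec_of_conjTranspose_mul_self hA v
  simp only [hc, ← Finset.mul_sum] at h
  exact (mul_eq_right₀ (sum_normSq_pos hv).ne').mp h

theorem normSq_eq_one_of_mulVec_eq_mul_left {A : Matrix n n ℍ[ℝ]} (hA : Aᴴ * A = 1)
    {v : n → ℍ[ℝ]} (hv : v ≠ 0) {c : ℍ[ℝ]} (hAv : A *ᵥ v = fun i => c * v i) :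
    normSq c = 1 :=
  normSq_eq_one_of_conjTranspose_mul_self hA hv fun i => by rw [hAv, map_mul]

theorem normSq_eq_one_of_mulVec_eq_mul_right {A : Matrix n n ℍ[ℝ]} (hA : Aᴴ * A = 1)
    {v : n → ℍ[ℝ]} (hv : v ≠ 0) {c : ℍ[ℝ]} (hAv : A *ᵥ v = fun i => v i * c) :
    normSq c = 1 :=
  normSq_eq_one_of_conjTranspose_mul_self hA hv fun i => by rw [hAv, map_mul, mul_comm]

variable {A U : Matrix n n ℍ[ℝ]} {q : n → ℍ[ℝ]}

theorem conjTranspose_mulVec_ne_zero (hU : Uᴴ * U = 1) {v : n → ℍ[ℝ]} (hv : v ≠ 0) :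
    Uᴴ *ᵥ v ≠ 0 := fun h => hv <| by
  rw [← one_mulVec v, ← mul_eq_one_comm.mp hU, ← mulVec_mulVec, h, mulVec_zero]

theorem re_mul_sum_normSq_eq_of_mulVec_eq (hU : Uᴴ * U = 1) (hAU : A * U = U * diagonal q)
    {lam : ℍ[ℝ]} {v : n → ℍ[ℝ]} (hv : A *ᵥ v = fun i => lam * v i) :
    lam.re * ∑ j, normSq ((Uᴴ *ᵥ v) j) = ∑ j, (q j).re * normSq ((Uᴴ *ᵥ v) j) := by
  have hUU : U * Uᴴ = 1 := mul_eq_one_comm.mp hU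
  have hv' : v = U *ᵥ (Uᴴ *ᵥ v) := by rw [mulVec_mulVec, hUU, one_mulVec]
  calc lam.re * ∑ j, normSq ((Uᴴ *ᵥ v) j) = (star v ⬝ᵥ A *ᵥ v).re := by
        rw [sum_normSq_mulVec_of_conjTranspose_mul_self (by rwa [conjTranspose_conjTranspose]),
          hv, re_star_dotProduct_mul (fun _ => lam), Finset.mul_sum]
    _ = (star (Uᴴ *ᵥ v) ⬝ᵥ diagonal q *ᵥ (Uᴴ *ᵥ v)).re := by
        conv_lhs => rw [hv', star_mulVec_dotProduct, mulVec_mulVec, mulVec_mulVec,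
          Matrix.mul_assoc, hAU, ← Matrix.mul_assoc, hU, Matrix.one_mul]
    _ = ∑ j, (q j).re * normSq ((Uᴴ *ᵥ v) j) := by
        rw [funext (mulVec_diagonal q _), re_star_dotProduct_mul]

theorem le_re_of_mulVec_eq (hU : Uᴴ * U = 1) (hAU : A * U = U * diagonal q)
    {lam : ℍ[ℝ]} {v : n → ℍ[ℝ]} (hv : A *ᵥ v = fun i => lam * v i) (hv0 : v ≠ 0) {r : ℝ}
    (hr : ∀ j, (Uᴴ *ᵥ v) j ≠ 0 → r ≤ (q j).re) : r ≤ lam.re :=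
  le_of_mul_sum_eq_sum_mul (fun _ => normSq_nonneg)
    (sum_normSq_pos (conjTranspose_mulVec_ne_zero hU hv0))
    (re_mul_sum_normSq_eq_of_mulVec_eq hU hAU hv) fun j hj => hr j (normSq_ne_zero.mp hj)

theorem re_le_of_mulVec_eq (hU : Uᴴ * U = 1) (hAU : A * U = U * diagonal q)
    {lam : ℍ[ℝ]} {v : n → ℍ[ℝ]} (hv : A *ᵥ v = fun i => lam * v i) (hv0 : v ≠ 0) {r : ℝ}
    (hr : ∀ j, (Uᴴ *ᵥ v) j ≠ 0 → (q j).re ≤ r) : lam.re ≤ r :=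
  ge_of_mul_sum_eq_sum_mul (fun _ => normSq_nonneg)
    (sum_normSq_pos (conjTranspose_mulVec_ne_zero hU hv0))
    (re_mul_sum_normSq_eq_of_mulVec_eq hU hAU hv) fun j hj => hr j (normSq_ne_zero.mp hj)

end Matrix

theorem symplectic_left_eigenvalue_bounds {n : ℕ}
    (A : Matrix (Fin n) (Fin n) ℍ[ℝ]) (hA : Aᴴ * A = 1)
    (q : Fin n → ℍ[ℝ]) (hq : Monotone fun j => (q j).re)
    (u : Fin n → Fin n → ℍ[ℝ])
    (horth : ∀ i j, star (u i) ⬝ᵥ u j = if i = j then 1 else 0)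
    (heig : ∀ j, A.mulVec (u j) = fun l => u j l * q j)
    (lam : ℍ[ℝ])
    (V : Submodule ℍ[ℝ]ᵐᵒᵖ (Fin n → ℍ[ℝ]))
    (hV : (V : Set (Fin n → ℍ[ℝ])) = {v | A.mulVec v = fun i => lam * v i})
    (k : ℕ) (hk : 1 ≤ k) (hkn : k ≤ n)
    (hdim : k ≤ Module.finrank ℍ[ℝ]ᵐᵒᵖ V) :
    ((q ⟨k - 1, by omega⟩).re ≤ lam.re ∧ lam.re ≤ (q ⟨n - k, by omega⟩).re) ∧
    ((n + 1) / 2 < k →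
      ∀ j : Fin n, n - k ≤ (j : ℕ) → (j : ℕ) ≤ k - 1 →
        ∃ r : ℍ[ℝ], r ≠ 0 ∧ q j = r * lam * r⁻¹) := by
  have hVA : ∀ v ∈ V, A *ᵥ v = fun i => lam * v i := fun v hv => (Set.ext_iff.mp hV v).mp hv
  have hU := conjTranspose_transpose_of_mul_transpose_of horth
  have hAU := mul_transpose_of_eq_transpose_of_mul_diagonal heig
  have hlow : (q ⟨k - 1, by omega⟩).re ≤ lam.re := by
    obtain ⟨v, hvV, hv0, hvs⟩ := V.exists_mem_ne_zero_forall_mulVec_eq_zero (of u)ᵀᴴ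
      (Finset.Iio ⟨k - 1, by omega⟩) (by rw [Fin.card_Iio, Fin.val_mk]; omega)
    exact le_re_of_mulVec_eq hU hAU (hVA v hvV) hv0 fun j hj =>
      hq (not_lt.mp fun h => hj (hvs j (Finset.mem_Iio.mpr h)))
  have hhigh : lam.re ≤ (q ⟨n - k, by omega⟩).re := by
    obtain ⟨v, hvV, hv0, hvs⟩ := V.exists_mem_ne_zero_forall_mulVec_eq_zero (of u)ᵀᴴ
      (Finset.Ioi ⟨n - k, by omega⟩) (by rw [Fin.card_Ioi, Fin.val_mk]; omega)
    exact re_le_of_mulVec_eq hU hAU (hVA v hvV) hv0 fun j hj =>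
      hq (not_lt.mp fun h => hj (hvs j (Finset.mem_Ioi.mpr h)))
  refine ⟨⟨hlow, hhigh⟩, fun _ j hj₁ hj₂ => ?_⟩
  have hre : (q j).re = lam.re := le_antisymm ((hq hj₂).trans hlow) (hhigh.trans (hq hj₁))
  obtain ⟨v, hvV, hv0⟩ :=
    V.exists_mem_ne_zero_of_ne_bot (Submodule.one_le_finrank_iff.mp (hk.trans hdim))
  have hu0 : u j ≠ 0 := fun h => by simpa [h] using horth j j
  have hnorm : normSq (q j) = normSq lam := by
    rw [normSq_eq_one_of_mulVec_eq_mul_right hA hu0 (heig j),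
      normSq_eq_one_of_mulVec_eq_mul_left hA hv0 (hVA v hvV)]
  obtain ⟨r, hr, hqr⟩ := exists_ne_zero_mul_eq_mul_of_re_eq_of_normSq_eq hre hnorm
  exact ⟨r, hr, (eq_mul_inv_iff_mul_eq₀ hr).mpr hqr⟩
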